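/- Let Q and Q' be strongly locally finite quivers, and let I ⊂ KQ and I' ⊂ KQ' be admissible ideals with induced ideals ℐ, ℐ' in the path categories. Then there is an isomorphism of K-categories K(𝒬 × 𝒬')/(ℐ □ ℐ') ≅ (K𝒬/ℐ) ⊗_K (K𝒬'/ℐ'), where ℐ □ ℐ' is the induced box-product ideal. -/

import Mathlib

/-!
Formalization of a statement from:
"Triangular Matrix Categories Over Path Categories and Quasi-hereditary Categories,
as well as One-Point Extensions by projectives" by R. Ochoa, M. Ortíz.
-/

open CategoryTheory CategoryTheory.Limits

attribute [local instance] CategoryTheory.Limits.hasBinaryBiproducts_of_finite_biproducts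
  CategoryTheory.Limits.hasBiproductsOfShape_finite
  CategoryTheory.Limits.HasFiniteBiproducts.of_hasFiniteProducts

noncomputable section

namespace Paper
/-- The path category `K𝒬` of a quiver (in the sense of Ringel): objects are the
vertices, and `Hom(a,b)` is the free `K`-vector space on the set of paths from `a`
to `b`, with composition induced by concatenation of paths. -/
def PathCat (K V : Type) [Field K] [Quiver.{0} V] := V

namespace PathCat

variable {K : Type} [Field K] {V : Type} [Quiver.{0} V]

/-- View a vertex as an object of the path category. -/
def vtx (K : Type) [Field K] (v : V) : PathCat K V := v
/-- The vertex underlying an object of the path category. -/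
def out (v : PathCat K V) : V := v

/-- Composition (by linear extension of concatenation of paths). -/
def pcomp {a b c : V} (f : Quiver.Path a b →₀ K) (g : Quiver.Path b c →₀ K) :
    Quiver.Path a c →₀ K :=
  f.sum fun p cp => g.sum fun q cq => Finsupp.single (p.comp q) (cp * cq)

lemma pcomp_single_single {a b c : V} (p : Quiver.Path a b) (q : Quiver.Path b c) (x y : K) :
    pcomp (Finsupp.single p x) (Finsupp.single q y) = Finsupp.single (p.comp q) (x * y) := by
  rw [pcomp, Finsupp.sum_single_index, Finsupp.sum_single_index]
  · simp
  · rw [Finsupp.sum_single_index] <;> simp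

lemma zero_pcomp {a b c : V} (g : Quiver.Path b c →₀ K) :
    pcomp (0 : Quiver.Path a b →₀ K) g = 0 := by
  simp [pcomp]

lemma pcomp_zero {a b c : V} (f : Quiver.Path a b →₀ K) :
    pcomp f (0 : Quiver.Path b c →₀ K) = 0 := by
  simp [pcomp]

lemma add_pcomp {a b c : V} (f f' : Quiver.Path a b →₀ K) (g : Quiver.Path b c →₀ K) :
    pcomp (f + f') g = pcomp f g + pcomp f' g := by
  classical
  rw [pcomp, Finsupp.sum_add_index']
  · rfl
  · intro p; simp
  · intro p x y
    rw [← Finsupp.sum_add]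
    congr 1; funext q cq
    rw [add_mul, Finsupp.single_add]

lemma pcomp_add {a b c : V} (f : Quiver.Path a b →₀ K) (g g' : Quiver.Path b c →₀ K) :
    pcomp f (g + g') = pcomp f g + pcomp f g' := by
  classical
  rw [pcomp, pcomp, pcomp, ← Finsupp.sum_add]
  congr 1; funext p cp
  rw [Finsupp.sum_add_index']
  · intro q; simp
  · intro q x y
    rw [mul_add, Finsupp.single_add]

lemma smul_pcomp {a b c : V} (x : K) (f : Quiver.Path a b →₀ K) (g : Quiver.Path b c →₀ K) :
    pcomp (x • f) g = x • pcomp f g := by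
  classical
  induction f using Finsupp.induction_linear with
  | zero => simp [zero_pcomp]
  | add f f' hf hf' => rw [smul_add, add_pcomp, hf, hf', add_pcomp, smul_add]
  | single p c =>
    induction g using Finsupp.induction_linear with
    | zero => simp [pcomp_zero]
    | add g g' hg hg' => rw [pcomp_add, hg, hg', pcomp_add, smul_add]
    | single q d =>
      rw [Finsupp.smul_single, pcomp_single_single, pcomp_single_single,
        Finsupp.smul_single, smul_eq_mul, smul_eq_mul, mul_assoc]

lemma pcomp_smul {a b c : V} (x : K) (f : Quiver.Path a b →₀ K) (g : Quiver.Path b c →₀ K) :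
    pcomp f (x • g) = x • pcomp f g := by
  classical
  induction f using Finsupp.induction_linear with
  | zero => simp [zero_pcomp]
  | add f f' hf hf' => rw [add_pcomp, hf, hf', add_pcomp, smul_add]
  | single p c =>
    induction g using Finsupp.induction_linear with
    | zero => simp [pcomp_zero]
    | add g g' hg hg' => rw [smul_add, pcomp_add, hg, hg', pcomp_add, smul_add]
    | single q d =>
      rw [Finsupp.smul_single, pcomp_single_single, pcomp_single_single,
        Finsupp.smul_single, smul_eq_mul, smul_eq_mul, mul_left_comm]

instance : Category.{0} (PathCat K V) where
  Hom a b := Quiver.Path (out a) (out b) →₀ K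
  id a := Finsupp.single Quiver.Path.nil 1
  comp f g := pcomp f g
  id_comp {a b} f := by
    show pcomp (Finsupp.single Quiver.Path.nil 1) f = f
    classical
    induction f using Finsupp.induction_linear with
    | zero => simp [pcomp_zero]
    | add f f' hf hf' => rw [pcomp_add, hf, hf']
    | single p c => rw [pcomp_single_single, Quiver.Path.nil_comp, one_mul]
  comp_id {a b} f := by
    show pcomp f (Finsupp.single Quiver.Path.nil 1) = f
    classical
    induction f using Finsupp.induction_linear with
    | zero => simp [zero_pcomp]
    | add f f' hf hf' => rw [add_pcomp, hf, hf']
    | single p c => rw [pcomp_single_single, Quiver.Path.comp_nil, mul_one]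
  assoc {a b c d} f g h := by
    show pcomp (pcomp f g) h = pcomp f (pcomp g h)
    classical
    induction f using Finsupp.induction_linear with
    | zero => simp [zero_pcomp]
    | add f f' hf hf' => rw [add_pcomp, add_pcomp, hf, hf', add_pcomp]
    | single p x =>
      induction g using Finsupp.induction_linear with
      | zero => simp [zero_pcomp, pcomp_zero]
      | add g g' hg hg' => rw [pcomp_add, add_pcomp, hg, hg', add_pcomp, pcomp_add]
      | single q y =>
        induction h using Finsupp.induction_linear with
        | zero => simp [pcomp_zero]
        | add h h' hh hh' => rw [pcomp_add, pcomp_add, hh, hh', pcomp_add]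
        | single r z =>
          rw [pcomp_single_single, pcomp_single_single, pcomp_single_single,
            pcomp_single_single, Quiver.Path.comp_assoc, mul_assoc]

instance : Preadditive (PathCat K V) where
  homGroup a b := inferInstanceAs (AddCommGroup (Quiver.Path (out a) (out b) →₀ K))
  add_comp _ _ _ f f' g := add_pcomp f f' g
  comp_add _ _ _ f g g' := pcomp_add f g g'

instance : CategoryTheory.Linear K (PathCat K V) where
  homModule a b := inferInstanceAs (Module K (Quiver.Path (out a) (out b) →₀ K))
  smul_comp _ _ _ x f g := smul_pcomp x f g
  comp_smul _ _ _ f x g := pcomp_smul x f g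

/-- The class in `K𝒬` of a single path, as a morphism. -/
def ofPath {a b : V} (p : Quiver.Path a b) : (vtx K a : PathCat K V) ⟶ vtx K b :=
  Finsupp.single p 1

end PathCat

variable {K : Type} [Field K]
variable {C : Type} [Category.{0} C] [Preadditive C] [CategoryTheory.Linear K C]

structure CatIdeal (K : Type) [Field K] (C : Type) [Category.{0} C] [Preadditive C]
    [CategoryTheory.Linear K C] where
  I : ∀ X Y : C, Submodule K (X ⟶ Y)
  comp_left : ∀ {X Y Z : C} (f : X ⟶ Y) (g : Y ⟶ Z), f ∈ I X Y → f ≫ g ∈ I X Z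
  comp_right : ∀ {X Y Z : C} (f : X ⟶ Y) (g : Y ⟶ Z), g ∈ I Y Z → f ≫ g ∈ I X Z

/-- The quotient category `C/I` of a `K`-linear category by a two-sided ideal. -/
def CatQuot (I : CatIdeal K C) := C

namespace CatQuot

variable (I : CatIdeal K C)

/-- An object of `C` as an object of `C/I`. -/
def obj (X : C) : CatQuot I := X
variable {I}

/-- The object of `C` underlying an object of `C/I`. -/
def out (X : CatQuot I) : C := X

instance : Category.{0} (CatQuot I) where
  Hom X Y := (out X ⟶ out Y) ⧸ I.I (out X) (out Y)
  id X := Submodule.Quotient.mk (𝟙 (out X))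
  comp {X Y Z} f g :=
    Quotient.liftOn₂' f g (fun f g => Submodule.Quotient.mk (f ≫ g)) (by
      intro a₁ b₁ a₂ b₂ ha hb
      rw [Submodule.quotientRel_def] at ha hb
      apply (Submodule.Quotient.eq _).2
      have : a₁ ≫ b₁ - a₂ ≫ b₂ = (a₁ - a₂) ≫ b₁ + a₂ ≫ (b₁ - b₂) := by
        rw [Preadditive.sub_comp, Preadditive.comp_sub]
        abel
      rw [this]
      exact Submodule.add_mem _ (I.comp_left _ _ ha) (I.comp_right _ _ hb))
  id_comp f := by
    obtain ⟨f, rfl⟩ := Submodule.Quotient.mk_surjective _ f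
    show Submodule.Quotient.mk _ = _
    rw [Category.id_comp]
  comp_id f := by
    obtain ⟨f, rfl⟩ := Submodule.Quotient.mk_surjective _ f
    show Submodule.Quotient.mk _ = _
    rw [Category.comp_id]
  assoc f g h := by
    obtain ⟨f, rfl⟩ := Submodule.Quotient.mk_surjective _ f
    obtain ⟨g, rfl⟩ := Submodule.Quotient.mk_surjective _ g
    obtain ⟨h, rfl⟩ := Submodule.Quotient.mk_surjective _ h
    show Submodule.Quotient.mk _ = Submodule.Quotient.mk _
    rw [Category.assoc]

/-- The class of a morphism of `C` in the quotient category. -/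
def mkHom {X Y : C} (f : X ⟶ Y) : (obj I X ⟶ obj I Y) :=
  show (X ⟶ Y) ⧸ I.I X Y from Submodule.Quotient.mk f

instance : Preadditive (CatQuot I) where
  homGroup X Y := inferInstanceAs (AddCommGroup ((out X ⟶ out Y) ⧸ I.I (out X) (out Y)))
  add_comp X Y Z f f' g := by
    obtain ⟨f, rfl⟩ := Submodule.Quotient.mk_surjective _ f
    obtain ⟨f', rfl⟩ := Submodule.Quotient.mk_surjective _ f'
    obtain ⟨g, rfl⟩ := Submodule.Quotient.mk_surjective _ g
    show Submodule.Quotient.mk ((f + f') ≫ g)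
      = Submodule.Quotient.mk (f ≫ g) + Submodule.Quotient.mk (f' ≫ g)
    rw [Preadditive.add_comp, Submodule.Quotient.mk_add]
  comp_add X Y Z f g g' := by
    obtain ⟨f, rfl⟩ := Submodule.Quotient.mk_surjective _ f
    obtain ⟨g, rfl⟩ := Submodule.Quotient.mk_surjective _ g
    obtain ⟨g', rfl⟩ := Submodule.Quotient.mk_surjective _ g'
    show Submodule.Quotient.mk (f ≫ (g + g'))
      = Submodule.Quotient.mk (f ≫ g) + Submodule.Quotient.mk (f ≫ g')
    rw [Preadditive.comp_add, Submodule.Quotient.mk_add]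

instance : CategoryTheory.Linear K (CatQuot I) where
  homModule X Y := inferInstanceAs (Module K ((out X ⟶ out Y) ⧸ I.I (out X) (out Y)))
  smul_comp X Y Z x f g := by
    obtain ⟨f, rfl⟩ := Submodule.Quotient.mk_surjective _ f
    obtain ⟨g, rfl⟩ := Submodule.Quotient.mk_surjective _ g
    show Quotient.liftOn₂' _ _ _ _ = _
    rw [show (x • Submodule.Quotient.mk f : (out X ⟶ out Y) ⧸ I.I _ _)
      = Submodule.Quotient.mk (x • f) from rfl]
    show Submodule.Quotient.mk ((x • f) ≫ g) = _
    rw [CategoryTheory.Linear.smul_comp]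
    rfl
  comp_smul X Y Z f x g := by
    obtain ⟨f, rfl⟩ := Submodule.Quotient.mk_surjective _ f
    obtain ⟨g, rfl⟩ := Submodule.Quotient.mk_surjective _ g
    rw [show (x • Submodule.Quotient.mk g : (out Y ⟶ out Z) ⧸ I.I _ _)
      = Submodule.Quotient.mk (x • g) from rfl]
    show Submodule.Quotient.mk (f ≫ (x • g)) = _
    rw [CategoryTheory.Linear.comp_smul]
    rfl

/-- The quotient functor `C ⥤ C/I`. -/
def quotFunctor (I : CatIdeal K C) : C ⥤ CatQuot I where
  obj X := obj I X
  map f := mkHom f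
  map_id X := rfl
  map_comp f g := rfl

end CatQuot

section TensorCatSection
open TensorProduct

/-- The tensor product `C ⊗_K D` of two `K`-linear categories: objects are pairs, and
`Hom((c,d),(c',d')) = C(c,c') ⊗_K D(d,d')`, with composition induced by the compositions
of `C` and `D` on simple tensors. -/
def TensorCat (K C D : Type) [Field K] [Category.{0} C] [Category.{0} D]
    [Preadditive C] [Preadditive D]
    [CategoryTheory.Linear K C] [CategoryTheory.Linear K D] := C × D

namespace TensorCat

variable {K C D : Type} [Field K] [Category.{0} C] [Category.{0} D]
  [Preadditive C] [Preadditive D] [CategoryTheory.Linear K C] [CategoryTheory.Linear K D]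

/-- Pairs as objects of the tensor product category. -/
def mk (c : C) (d : D) : TensorCat K C D := (c, d)

def fst (X : TensorCat K C D) : C := X.1
def snd (X : TensorCat K C D) : D := X.2

/-- Composition with a fixed simple tensor, as a bilinear map. -/
def compAux (X Y Z : TensorCat K C D) (f : fst X ⟶ fst Y) (g : snd X ⟶ snd Y) :
    (fst Y ⟶ fst Z) →ₗ[K] (snd Y ⟶ snd Z) →ₗ[K]
      ((fst X ⟶ fst Z) ⊗[K] (snd X ⟶ snd Z)) :=
  LinearMap.mk₂ K (fun f' g' => (f ≫ f') ⊗ₜ[K] (g ≫ g'))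
    (fun f' f'' g' => by rw [Preadditive.comp_add, add_tmul])
    (fun c f' g' => by rw [CategoryTheory.Linear.comp_smul, smul_tmul'])
    (fun f' g' g'' => by rw [Preadditive.comp_add, tmul_add])
    (fun c f' g' => by rw [CategoryTheory.Linear.comp_smul, tmul_smul])

/-- Composition in the tensor product category, as a bilinear map. -/
def compBil (X Y Z : TensorCat K C D) :
    (fst X ⟶ fst Y) →ₗ[K] (snd X ⟶ snd Y) →ₗ[K]
      (((fst Y ⟶ fst Z) ⊗[K] (snd Y ⟶ snd Z)) →ₗ[K]
        ((fst X ⟶ fst Z) ⊗[K] (snd X ⟶ snd Z))) :=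
  LinearMap.mk₂ K (fun f g => TensorProduct.lift (compAux X Y Z f g))
    (fun f f' g => by
      apply TensorProduct.ext'
      intro x y
      simp only [TensorProduct.lift.tmul,LinearMap.add_apply, compAux, LinearMap.mk₂_apply]
      rw [Preadditive.add_comp, add_tmul])
    (fun c f g => by
      apply TensorProduct.ext'
      intro x y
      simp only [TensorProduct.lift.tmul, LinearMap.smul_apply, compAux, LinearMap.mk₂_apply]
      rw [CategoryTheory.Linear.smul_comp, smul_tmul'])
    (fun f g g' => by
      apply TensorProduct.ext'
      intro x y
      simp only [TensorProduct.lift.tmul, LinearMap.add_apply, compAux, LinearMap.mk₂_apply]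
      rw [Preadditive.add_comp, tmul_add])
    (fun c f g => by
      apply TensorProduct.ext'
      intro x y
      simp only [TensorProduct.lift.tmul, LinearMap.smul_apply, compAux, LinearMap.mk₂_apply]
      rw [CategoryTheory.Linear.smul_comp, tmul_smul])

instance : Category.{0} (TensorCat K C D) where
  Hom X Y := (fst X ⟶ fst Y) ⊗[K] (snd X ⟶ snd Y)
  id X := 𝟙 (fst X) ⊗ₜ[K] 𝟙 (snd X)
  comp {X Y Z} fg fg' := TensorProduct.lift (compBil X Y Z) fg fg'
  id_comp {X Y} fg := by
    show TensorProduct.lift (compBil X X Y) (𝟙 (fst X) ⊗ₜ[K] 𝟙 (snd X)) fg = fg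
    induction fg using TensorProduct.induction_on with
    | zero => simp
    | tmul x y =>
      simp only [TensorProduct.lift.tmul, compBil, compAux, LinearMap.mk₂_apply]
      rw [Category.id_comp, Category.id_comp]
    | add fg fg' h h' => simp only [map_add, h, h']
  comp_id {X Y} fg := by
    show TensorProduct.lift (compBil X Y Y) fg (𝟙 (fst Y) ⊗ₜ[K] 𝟙 (snd Y)) = fg
    induction fg using TensorProduct.induction_on with
    | zero => simp
    | tmul x y =>
      simp only [TensorProduct.lift.tmul, compBil, compAux, LinearMap.mk₂_apply]
      rw [Category.comp_id, Category.comp_id]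
    | add fg fg' h h' => simp only [map_add, LinearMap.add_apply, h, h']
  assoc {W X Y Z} fg fg' fg'' := by
    show TensorProduct.lift (compBil W Y Z) (TensorProduct.lift (compBil W X Y) fg fg') fg''
      = TensorProduct.lift (compBil W X Z) fg (TensorProduct.lift (compBil X Y Z) fg' fg'')
    induction fg using TensorProduct.induction_on with
    | zero => simp
    | add a b ha hb => simp only [map_add, LinearMap.add_apply, ha, hb]
    | tmul f g =>
      induction fg' using TensorProduct.induction_on with
      | zero => simp
      | add a b ha hb => simp only [map_add, LinearMap.add_apply, ha, hb]
      | tmul f' g' =>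
        induction fg'' using TensorProduct.induction_on with
        | zero => simp
        | add a b ha hb => simp only [map_add, LinearMap.add_apply, ha, hb]
        | tmul f'' g'' =>
          simp only [TensorProduct.lift.tmul, compBil, compAux, LinearMap.mk₂_apply]
          rw [Category.assoc, Category.assoc]

instance : Preadditive (TensorCat K C D) where
  homGroup X Y := inferInstanceAs (AddCommGroup ((fst X ⟶ fst Y) ⊗[K] (snd X ⟶ snd Y)))
  add_comp X Y Z f f' g := by
    exact LinearMap.congr_fun
      (map_add (TensorProduct.lift (compBil X Y Z))
        (show (fst X ⟶ fst Y) ⊗[K] (snd X ⟶ snd Y) from f)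
        (show (fst X ⟶ fst Y) ⊗[K] (snd X ⟶ snd Y) from f'))
      (show (fst Y ⟶ fst Z) ⊗[K] (snd Y ⟶ snd Z) from g)
  comp_add X Y Z f g g' := by
    exact map_add (TensorProduct.lift (compBil X Y Z) f)
      (show (fst Y ⟶ fst Z) ⊗[K] (snd Y ⟶ snd Z) from g)
      (show (fst Y ⟶ fst Z) ⊗[K] (snd Y ⟶ snd Z) from g')

instance : CategoryTheory.Linear K (TensorCat K C D) where
  homModule X Y := inferInstanceAs (Module K ((fst X ⟶ fst Y) ⊗[K] (snd X ⟶ snd Y)))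
  smul_comp X Y Z c f g := by
    exact LinearMap.congr_fun
      (map_smul (TensorProduct.lift (compBil X Y Z)) c
        (show (fst X ⟶ fst Y) ⊗[K] (snd X ⟶ snd Y) from f))
      (show (fst Y ⟶ fst Z) ⊗[K] (snd Y ⟶ snd Z) from g)
  comp_smul X Y Z f c g := by
    exact map_smul (TensorProduct.lift (compBil X Y Z) f) c
      (show (fst Y ⟶ fst Z) ⊗[K] (snd Y ⟶ snd Z) from g)

end TensorCat


end TensorCatSection
section QuiverStuff

/-- A strongly locally finite quiver: locally finite (finitely many arrows starting and
ending at each vertex) and interval finite (finitely many paths between any two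
vertices). -/
class StronglyLocallyFinite (V : Type) [Quiver.{0} V] : Prop where
  out_finite : ∀ a : V, Finite (Σ b : V, a ⟶ b)
  in_finite : ∀ b : V, Finite (Σ a : V, a ⟶ b)
  interval_finite : ∀ a b : V, Finite (Quiver.Path a b)

/-- An isomorphism of `K`-linear categories: a `K`-linear functor which is bijective on
objects and bijective on each Hom space. -/
structure LinearCatIso (K : Type) [Field K] (C D : Type) [Category.{0} C] [Category.{0} D]
    [Preadditive C] [Preadditive D]
    [CategoryTheory.Linear K C] [CategoryTheory.Linear K D] where
  F : C ⥤ D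
  objBijective : Function.Bijective F.obj
  homBijective : ∀ X Y : C, Function.Bijective (F.map : (X ⟶ Y) → (F.obj X ⟶ F.obj Y))
  additive : F.Additive
  linear : F.Linear K

variable {K : Type} [Field K]
variable {C : Type} [Category.{0} C] [Preadditive C] [CategoryTheory.Linear K C]

/-- The two-sided ideal generated by a set of morphisms `G` (given as a set of triples
`⟨A, B, s : A ⟶ B⟩`): the span of all composites `u ≫ s ≫ v` with `s` a generator. -/
def genIdeal (G : Set (Σ (A : C) (B : C), A ⟶ B)) : CatIdeal K C where
  I X Y := Submodule.span K
    {h | ∃ (A B : C) (s : A ⟶ B) (u : X ⟶ A) (v : B ⟶ Y),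
      (⟨A, B, s⟩ : Σ (A : C) (B : C), A ⟶ B) ∈ G ∧ u ≫ s ≫ v = h}
  comp_left {X Y Z} f g hf := by
    induction hf using Submodule.span_induction with
    | mem x hx =>
      obtain ⟨A, B, s, u, v, hs, rfl⟩ := hx
      exact Submodule.subset_span ⟨A, B, s, u, v ≫ g, hs, by simp⟩
    | zero => simp only [Limits.zero_comp]; exact Submodule.zero_mem _
    | add x y _ _ hx hy => simpa [Preadditive.add_comp] using Submodule.add_mem _ hx hy
    | smul c x _ hx => simpa [CategoryTheory.Linear.smul_comp] using Submodule.smul_mem _ c hx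
  comp_right {X Y Z} f g hg := by
    induction hg using Submodule.span_induction with
    | mem x hx =>
      obtain ⟨A, B, s, u, v, hs, rfl⟩ := hx
      refine Submodule.subset_span ⟨A, B, s, f ≫ u, v, hs, by simp⟩
    | zero => simp only [Limits.comp_zero]; exact Submodule.zero_mem _
    | add x y _ _ hx hy => simpa [Preadditive.comp_add] using Submodule.add_mem _ hx hy
    | smul c x _ hx => simpa [CategoryTheory.Linear.comp_smul] using Submodule.smul_mem _ c hx

variable {V : Type} [Quiver.{0} V]

/-- An ideal of a path category is admissible if it is generated by a set of relations,
i.e. by morphisms supported on paths of length at least two. -/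
def IsAdmissible (I : CatIdeal K (PathCat K V)) : Prop :=
  ∃ G : Set (Σ (A : PathCat K V) (B : PathCat K V), A ⟶ B),
    (∀ g ∈ G, ∀ p ∈ (show Quiver.Path (PathCat.out g.1) (PathCat.out g.2.1) →₀ K
        from g.2.2).support, 2 ≤ p.length) ∧
    I = genIdeal G

end QuiverStuff

section BoxProduct

variable (K : Type) [Field K]

/-- The product quiver `Q × Q'`: vertices are pairs, and the arrows are
`(Q₁ × Q'₀) ∪ (Q₀ × Q'₁)`. -/
def BoxQuiver (V W : Type) := V × W

instance {V W : Type} [Quiver.{0} V] [Quiver.{0} W] : Quiver.{0} (BoxQuiver V W) where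
  Hom x y := ((x.1 ⟶ y.1) × PLift (x.2 = y.2)) ⊕ (PLift (x.1 = y.1) × (x.2 ⟶ y.2))

/-- A pair of vertices as a vertex of the product quiver. -/
def BoxQuiver.mk {V W : Type} (p : V) (q : W) : BoxQuiver V W := (p, q)

variable {V W : Type} [Quiver.{0} V] [Quiver.{0} W]

/-- For a fixed vertex `q` of `Q'`, the embedding `Q → Q × Q'`, `p ↦ (p,q)`. -/
def inlPre (q : W) : V ⥤q BoxQuiver V W where
  obj p := (p, q)
  map α := Sum.inl ⟨α, PLift.up rfl⟩

/-- For a fixed vertex `p` of `Q`, the embedding `Q' → Q × Q'`, `q ↦ (p,q)`. -/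
def inrPre (p : V) : W ⥤q BoxQuiver V W where
  obj q := (p, q)
  map β := Sum.inr ⟨PLift.up rfl, β⟩

variable {K}

/-- Lifting a morphism of a path category along a morphism of quivers. -/
def liftHom {V' : Type} [Quiver.{0} V'] (F : V ⥤q V') {a b : V}
    (f : Quiver.Path a b →₀ K) : Quiver.Path (F.obj a) (F.obj b) →₀ K :=
  Finsupp.mapDomain F.mapPath f

/-- The generators of the ideal `I □ I'` in `K(𝒬 × 𝒬')`: the ideal `I'` placed at each
vertex `p` of `Q`, the ideal `I` placed at each vertex `q` of `Q'`, and the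
commutativity relations `(p',β)(α,q) − (α,q')(p,β)`. -/
def boxGens (I : CatIdeal K (PathCat K V)) (I' : CatIdeal K (PathCat K W)) :
    Set (Σ (A : PathCat K (BoxQuiver V W)) (B : PathCat K (BoxQuiver V W)), A ⟶ B) :=
  {g | ∃ (p : V) (q q' : W) (f : Quiver.Path q q' →₀ K),
      (show (PathCat.vtx K q : PathCat K W) ⟶ PathCat.vtx K q' from f) ∈
        I'.I (PathCat.vtx K q) (PathCat.vtx K q') ∧
      g = ⟨PathCat.vtx K (BoxQuiver.mk p q), PathCat.vtx K (BoxQuiver.mk p q'),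
        show Quiver.Path (BoxQuiver.mk p q) (BoxQuiver.mk p q') →₀ K
          from liftHom (inrPre p) f⟩} ∪
  {g | ∃ (p p' : V) (q : W) (f : Quiver.Path p p' →₀ K),
      (show (PathCat.vtx K p : PathCat K V) ⟶ PathCat.vtx K p' from f) ∈
        I.I (PathCat.vtx K p) (PathCat.vtx K p') ∧
      g = ⟨PathCat.vtx K (BoxQuiver.mk p q), PathCat.vtx K (BoxQuiver.mk p' q),
        show Quiver.Path (BoxQuiver.mk p q) (BoxQuiver.mk p' q) →₀ K
          from liftHom (inlPre q) f⟩} ∪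
  {g | ∃ (p p' : V) (q q' : W) (α : p ⟶ p') (β : q ⟶ q'),
      g = ⟨PathCat.vtx K (BoxQuiver.mk p q), PathCat.vtx K (BoxQuiver.mk p' q'),
        show Quiver.Path (BoxQuiver.mk p q) (BoxQuiver.mk p' q') →₀ K from
          Finsupp.single
            ((Quiver.Hom.toPath
                (show (BoxQuiver.mk p q) ⟶ (BoxQuiver.mk p' q)
                  from Sum.inl ⟨α, PLift.up rfl⟩)).comp
              (Quiver.Hom.toPath
                (show (BoxQuiver.mk p' q) ⟶ (BoxQuiver.mk p' q')
                  from Sum.inr ⟨PLift.up rfl, β⟩))) 1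
          - Finsupp.single
            ((Quiver.Hom.toPath
                (show (BoxQuiver.mk p q) ⟶ (BoxQuiver.mk p q')
                  from Sum.inr ⟨PLift.up rfl, β⟩)).comp
              (Quiver.Hom.toPath
                (show (BoxQuiver.mk p q') ⟶ (BoxQuiver.mk p' q')
                  from Sum.inl ⟨α, PLift.up rfl⟩))) 1⟩}

/-- The ideal `ℐ □ ℐ'` of `K(𝒬 × 𝒬')`. -/
def boxIdeal (I : CatIdeal K (PathCat K V)) (I' : CatIdeal K (PathCat K W)) :
    CatIdeal K (PathCat K (BoxQuiver V W)) :=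
  genIdeal (boxGens I I')

end BoxProduct

/-!
The functor `K(𝒬 × 𝒬') ⥤ (K𝒬/ℐ) ⊗ (K𝒬'/ℐ')` extending `(α, q) ↦ α ⊗ 1`, `(p, β) ↦ 1 ⊗ β`
kills the generators of `ℐ □ ℐ'`, so it descends to a functor `toTensor` on the quotient, which
is the identity on objects. On morphisms it is inverted by `f ⊗ g ↦ (f, q) ≫ (p', g)`: this is
well defined since `(ℐ, q)` and `(p, ℐ')` lie in `ℐ □ ℐ'`, and it respects composition because,
modulo the commutativity relations, a vertical path can be moved past a horizontal one. So it is
a functor, and it sends the image of each path back to that path.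
-/

open TensorProduct

namespace PathCat

variable {V : Type} [Quiver.{0} V]

lemma ofPath_comp {a b c : V} (p : Quiver.Path a b) (q : Quiver.Path b c) :
    ofPath (K := K) (p.comp q) = ofPath p ≫ ofPath q := by
  show Finsupp.single (p.comp q) 1 = pcomp (Finsupp.single p 1) (Finsupp.single q 1)
  rw [pcomp_single_single, one_mul]

lemma ofPath_cons {a b c : V} (p : Quiver.Path a b) (e : b ⟶ c) :
    ofPath (K := K) (p.cons e) = ofPath p ≫ ofPath e.toPath :=
  ofPath_comp p e.toPath

@[elab_as_elim]
lemma hom_induction {a b : V} {motive : (vtx K a ⟶ vtx K b) → Prop} (f : vtx K a ⟶ vtx K b)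
    (zero : motive 0) (add : ∀ f g, motive f → motive g → motive (f + g))
    (smul_ofPath : ∀ (c : K) (p : Quiver.Path a b), motive (c • ofPath p)) : motive f :=
  Finsupp.induction_linear (motive := motive) f zero add fun p c => by
    convert smul_ofPath c p using 1
    exact (Finsupp.smul_single_one p c).symm

def liftMap (F : V ⥤q C) (a b : V) : (vtx K a ⟶ vtx K b) →ₗ[K] (F.obj a ⟶ F.obj b) :=
  Finsupp.linearCombination K fun p => composePath (F.mapPath p)

lemma liftMap_ofPath (F : V ⥤q C) {a b : V} (p : Quiver.Path a b) :
    liftMap F a b (ofPath (K := K) p) = composePath (F.mapPath p) :=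
  (Finsupp.linearCombination_single K 1 p).trans (one_smul K _)

lemma liftMap_comp (F : V ⥤q C) {a b c : V} (f : vtx K a ⟶ vtx K b) (g : vtx K b ⟶ vtx K c) :
    liftMap F a c (f ≫ g) = liftMap F a b f ≫ liftMap F b c g := by
  induction f using hom_induction with
  | zero => rw [Limits.zero_comp, map_zero, map_zero, Limits.zero_comp]
  | add f f' hf hf' => rw [Preadditive.add_comp, map_add, map_add, hf, hf', Preadditive.add_comp]
  | smul_ofPath c p =>
    rw [Linear.smul_comp, map_smul, map_smul, Linear.smul_comp]
    congr 1
    induction g using hom_induction with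
    | zero => rw [Limits.comp_zero, map_zero, map_zero, Limits.comp_zero]
    | add g g' hg hg' =>
      rw [Preadditive.comp_add, map_add, map_add, hg, hg', Preadditive.comp_add]
    | smul_ofPath d q =>
      rw [Linear.comp_smul, map_smul, map_smul, Linear.comp_smul, ← ofPath_comp,
        liftMap_ofPath, liftMap_ofPath, liftMap_ofPath, Prefunctor.mapPath_comp, composePath_comp]

def lift (F : V ⥤q C) : PathCat K V ⥤ C where
  obj a := F.obj (out a)
  map {a b} := liftMap F (out a) (out b)
  map_id _ := (liftMap_ofPath F Quiver.Path.nil).trans rfl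
  map_comp := liftMap_comp F

instance (F : V ⥤q C) : (lift (K := K) F).Additive where
  map_add := map_add (liftMap F _ _) _ _

instance (F : V ⥤q C) : (lift (K := K) F).Linear K where
  map_smul _ _ := map_smul (liftMap F _ _) _ _

lemma lift_map_ofPath (F : V ⥤q C) {a b : V} (p : Quiver.Path a b) :
    (lift F).map (ofPath (K := K) p) = composePath (F.mapPath p) :=
  liftMap_ofPath F p

def of : V ⥤q PathCat K V where
  obj := vtx K
  map e := ofPath e.toPath

lemma composePath_mapPath_of {a b : V} (p : Quiver.Path a b) :
    composePath ((of (K := K)).mapPath p) = ofPath p := by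
  induction p with
  | nil => rfl
  | cons p e ih => rw [Prefunctor.mapPath_cons, composePath_cons, ih, ofPath_cons]; rfl

variable {V' : Type} [Quiver.{0} V']

lemma lift_comp_of_map_eq_liftHom (F : V ⥤q V') {a b : V} (f : vtx K a ⟶ vtx K b) :
    (lift (F ⋙q of)).map f = liftHom F f := by
  induction f using hom_induction with
  | zero => exact (map_zero _).trans Finsupp.mapDomain_zero.symm
  | add f g hf hg =>
    exact (Functor.map_add _).trans (by rw [hf, hg]; exact Finsupp.mapDomain_add.symm)
  | smul_ofPath c p =>
    rw [Functor.map_smul, lift_map_ofPath, Prefunctor.mapPath_comp_apply]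
    exact (congrArg (c • ·) (composePath_mapPath_of (F.mapPath p))).trans <|
      (congrArg (c • ·) Finsupp.mapDomain_single.symm).trans (Finsupp.mapDomain_smul c _).symm

def map (F : V ⥤q V') : PathCat K V ⥤ PathCat K V' where
  obj a := vtx K (F.obj (out a))
  map f := liftHom F f
  map_id _ := Finsupp.mapDomain_single
  map_comp f g := (lift_comp_of_map_eq_liftHom F (f ≫ g)).symm.trans <|
    ((lift (F ⋙q of)).map_comp f g).trans <|
      congrArg₂ (· ≫ ·) (lift_comp_of_map_eq_liftHom F f) (lift_comp_of_map_eq_liftHom F g)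

instance (F : V ⥤q V') : (map (K := K) F).Additive where
  map_add := Finsupp.mapDomain_add

instance (F : V ⥤q V') : (map (K := K) F).Linear K where
  map_smul _ c := Finsupp.mapDomain_smul c _

lemma map_map_ofPath (F : V ⥤q V') {a b : V} (p : Quiver.Path a b) :
    (map (K := K) F).map (ofPath p) = ofPath (F.mapPath p) :=
  Finsupp.mapDomain_single

end PathCat

namespace CatQuot

variable {I : CatIdeal K C}

lemma mkHom_comp {X Y Z : C} (f : X ⟶ Y) (g : Y ⟶ Z) :
    mkHom (I := I) (f ≫ g) = mkHom f ≫ mkHom g := rfl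

lemma mkHom_eq_zero {X Y : C} {f : X ⟶ Y} (hf : f ∈ I.I X Y) : mkHom (I := I) f = 0 :=
  (Submodule.Quotient.mk_eq_zero _).2 hf

lemma mkHom_eq_mkHom {X Y : C} {f g : X ⟶ Y} (h : f - g ∈ I.I X Y) :
    mkHom (I := I) f = mkHom g :=
  (Submodule.Quotient.eq _).2 h

instance : (quotFunctor I).Additive where

instance : (quotFunctor I).Linear K where

variable {D : Type} [Category.{0} D] [Preadditive D] [CategoryTheory.Linear K D]

def lift (F : C ⥤ D) [F.Additive] [F.Linear K]
    (hF : ∀ {X Y : C} (f : X ⟶ Y), f ∈ I.I X Y → F.map f = 0) : CatQuot I ⥤ D where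
  obj X := F.obj (out X)
  map {X Y} := Submodule.liftQ _ (F.mapLinearMap K) fun f hf => hF f hf
  map_id X := F.map_id (out X)
  map_comp {X Y Z} f g := by
    obtain ⟨f, rfl⟩ := Submodule.Quotient.mk_surjective _ f
    obtain ⟨g, rfl⟩ := Submodule.Quotient.mk_surjective _ g
    exact F.map_comp f g

variable (F : C ⥤ D) [F.Additive] [F.Linear K]
  (hF : ∀ {X Y : C} (f : X ⟶ Y), f ∈ I.I X Y → F.map f = 0)

lemma lift_additive : (lift F hF).Additive where
  map_add := map_add (Submodule.liftQ _ (F.mapLinearMap K) _) _ _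

lemma lift_linear : (lift F hF).Linear K where
  map_smul _ _ := map_smul (Submodule.liftQ _ (F.mapLinearMap K) _) _ _

@[elab_as_elim]
lemma hom_induction_ofPath {V : Type} [Quiver.{0} V] {J : CatIdeal K (PathCat K V)} {a b : V}
    {motive : (obj J (PathCat.vtx K a) ⟶ obj J (PathCat.vtx K b)) → Prop}
    (f : obj J (PathCat.vtx K a) ⟶ obj J (PathCat.vtx K b))
    (zero : motive 0) (add : ∀ f g, motive f → motive g → motive (f + g))
    (smul_ofPath : ∀ (c : K) (p : Quiver.Path a b), motive (c • mkHom (PathCat.ofPath p))) :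
    motive f := by
  obtain ⟨f, rfl⟩ := Submodule.Quotient.mk_surjective _ f
  induction f using PathCat.hom_induction with
  | zero => exact zero
  | add f g hf hg => exact add _ _ hf hg
  | smul_ofPath c p => exact smul_ofPath c p

end CatQuot

section GenIdeal

variable {G : Set (Σ (A : C) (B : C), A ⟶ B)}

lemma mem_genIdeal {A B : C} {s : A ⟶ B} (hs : ⟨A, B, s⟩ ∈ G) : s ∈ (genIdeal (K := K) G).I A B :=
  Submodule.subset_span ⟨A, B, s, 𝟙 A, 𝟙 B, hs, by simp⟩

lemma map_eq_zero_of_mem_genIdeal {D : Type} [Category.{0} D] [Preadditive D]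
    [CategoryTheory.Linear K D] (F : C ⥤ D) [F.Additive] [F.Linear K]
    (hG : ∀ g ∈ G, F.map g.2.2 = 0) {X Y : C} {f : X ⟶ Y} (hf : f ∈ (genIdeal (K := K) G).I X Y) :
    F.map f = 0 := by
  induction hf using Submodule.span_induction with
  | mem f hf =>
    obtain ⟨A, B, s, u, v, hs, rfl⟩ := hf
    simp [hG _ hs]
  | zero => exact F.map_zero X Y
  | add f g _ _ hf hg => rw [F.map_add, hf, hg, add_zero]
  | smul c f _ hf => rw [F.map_smul, hf, smul_zero]

end GenIdeal

lemma TensorCat.tmul_comp {D : Type} [Category.{0} D] [Preadditive D] [CategoryTheory.Linear K D]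
    {X Y Z : TensorCat K C D} (f : X.fst ⟶ Y.fst) (g : X.snd ⟶ Y.snd) (f' : Y.fst ⟶ Z.fst)
    (g' : Y.snd ⟶ Z.snd) :
    CategoryStruct.comp (X := X) (Y := Y) (Z := Z) (f ⊗ₜ[K] g) (f' ⊗ₜ[K] g') =
      (f ≫ f') ⊗ₜ[K] (g ≫ g') :=
  rfl

namespace BoxQuiver

open PathCat CatQuot

variable {V W : Type} [Quiver.{0} V] [Quiver.{0} W]
  (I : CatIdeal K (PathCat K V)) (I' : CatIdeal K (PathCat K W))

-- `inlPath`, `inrPath`, `inlHom`, `inrHom` restate `mapPath` and `Functor.map` with endpoints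
-- written as `mk a q`, so that composites of them agree syntactically and `rw` can match them.
def inlPath (q : W) {a b : V} (s : Quiver.Path a b) : Quiver.Path (mk a q) (mk b q) :=
  (inlPre q).mapPath s

def inrPath (p : V) {a b : W} (t : Quiver.Path a b) : Quiver.Path (mk p a) (mk p b) :=
  (inrPre p).mapPath t

lemma inlPath_cons (q : W) {a b c : V} (s : Quiver.Path a b) (α : b ⟶ c) :
    inlPath q (s.cons α) = (inlPath q s).comp (inlPath q α.toPath) := rfl

lemma inrPath_cons (p : V) {a b c : W} (t : Quiver.Path a b) (β : b ⟶ c) :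
    inrPath p (t.cons β) = (inrPath p t).comp (inrPath p β.toPath) := rfl

def toTensorPrefunctor : BoxQuiver V W ⥤q TensorCat K (CatQuot I) (CatQuot I') where
  obj x := TensorCat.mk (obj I (vtx K x.1)) (obj I' (vtx K x.2))
  map {x y}
    | .inl ⟨α, h⟩ =>
      show (obj I (vtx K x.1) ⟶ obj I (vtx K y.1)) ⊗[K] (obj I' (vtx K x.2) ⟶ obj I' (vtx K y.2))
        from mkHom (ofPath α.toPath) ⊗ₜ eqToHom (by rw [h.down])
    | .inr ⟨h, β⟩ =>
      show (obj I (vtx K x.1) ⟶ obj I (vtx K y.1)) ⊗[K] (obj I' (vtx K x.2) ⟶ obj I' (vtx K y.2))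
        from eqToHom (by rw [h.down]) ⊗ₜ mkHom (ofPath β.toPath)

lemma composePath_toTensorPrefunctor_inl (q : W) {a b : V} (s : Quiver.Path a b) :
    composePath ((toTensorPrefunctor I I').mapPath ((inlPre q).mapPath s)) =
      mkHom (ofPath s) ⊗ₜ[K] 𝟙 (obj I' (vtx K q)) := by
  induction s with
  | nil => rfl
  | cons s α ih =>
    rw [Prefunctor.mapPath_cons, Prefunctor.mapPath_cons, composePath_cons, ih]
    exact (TensorCat.tmul_comp _ _ _ _).trans
      (congrArg₂ (· ⊗ₜ[K] ·) (by rw [ofPath_cons]; rfl) (Category.comp_id _))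

lemma composePath_toTensorPrefunctor_inr (p : V) {a b : W} (t : Quiver.Path a b) :
    composePath ((toTensorPrefunctor I I').mapPath ((inrPre p).mapPath t)) =
      𝟙 (obj I (vtx K p)) ⊗ₜ[K] mkHom (ofPath t) := by
  induction t with
  | nil => rfl
  | cons t β ih =>
    rw [Prefunctor.mapPath_cons, Prefunctor.mapPath_cons, composePath_cons, ih]
    exact (TensorCat.tmul_comp _ _ _ _).trans
      (congrArg₂ (· ⊗ₜ[K] ·) (Category.comp_id _) (by rw [ofPath_cons]; rfl))

lemma lift_toTensorPrefunctor_map_inl (q : W) {a b : V} (f : vtx K a ⟶ vtx K b) :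
    (PathCat.lift (toTensorPrefunctor I I')).map ((PathCat.map (inlPre q)).map f) =
      mkHom f ⊗ₜ[K] 𝟙 (obj I' (vtx K q)) := by
  induction f using hom_induction with
  | zero => rw [Functor.map_zero, Functor.map_zero]; exact (zero_tmul _ _).symm
  | add f g hf hg => rw [Functor.map_add, Functor.map_add, hf, hg]; exact (add_tmul _ _ _).symm
  | smul_ofPath c s =>
    rw [Functor.map_smul, Functor.map_smul, map_map_ofPath]
    erw [lift_map_ofPath, composePath_toTensorPrefunctor_inl]
    exact ((TensorProduct.mk K _ _).map_smul₂ c _ _).symm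

lemma lift_toTensorPrefunctor_map_inr (p : V) {a b : W} (g : vtx K a ⟶ vtx K b) :
    (PathCat.lift (toTensorPrefunctor I I')).map ((PathCat.map (inrPre p)).map g) =
      𝟙 (obj I (vtx K p)) ⊗ₜ[K] mkHom g := by
  induction g using hom_induction with
  | zero => rw [Functor.map_zero, Functor.map_zero]; exact (tmul_zero _ _).symm
  | add f g hf hg => rw [Functor.map_add, Functor.map_add, hf, hg]; exact (tmul_add _ _ _).symm
  | smul_ofPath c t =>
    rw [Functor.map_smul, Functor.map_smul, map_map_ofPath]
    erw [lift_map_ofPath, composePath_toTensorPrefunctor_inr]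
    exact ((TensorProduct.mk K _ _ _).map_smul c _).symm

lemma lift_toTensorPrefunctor_map_boxGens {g : Σ (A B : PathCat K (BoxQuiver V W)), A ⟶ B}
    (hg : g ∈ boxGens I I') : (PathCat.lift (toTensorPrefunctor I I')).map g.2.2 = 0 := by
  rcases hg with (⟨p, q, q', f, hf, rfl⟩ | ⟨p, p', q, f, hf, rfl⟩) | ⟨p, p', q, q', α, β, rfl⟩
  · exact (lift_toTensorPrefunctor_map_inr I I' p f).trans
      (by rw [mkHom_eq_zero hf]; exact tmul_zero _ _)
  · exact (lift_toTensorPrefunctor_map_inl I I' q f).trans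
      (by rw [mkHom_eq_zero hf]; exact zero_tmul _ _)
  · -- both composites are `α ⊗ β`
    refine ((PathCat.lift _).map_sub (f := ofPath _) (g := ofPath _)).trans (sub_eq_zero.2 ?_)
    rw [lift_map_ofPath, lift_map_ofPath]
    simp only [Prefunctor.mapPath_comp, composePath_comp, Prefunctor.mapPath_toPath,
      composePath_toPath]
    exact (TensorCat.tmul_comp _ _ _ _).trans <| (congrArg₂ (· ⊗ₜ[K] ·)
      ((Category.comp_id _).trans (Category.id_comp _).symm)
      ((Category.id_comp _).trans (Category.comp_id _).symm)).trans
        (TensorCat.tmul_comp (Y := (toTensorPrefunctor I I').obj (mk p q')) _ _ _ _).symm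

lemma lift_toTensorPrefunctor_map_eq_zero {X Y : PathCat K (BoxQuiver V W)} (f : X ⟶ Y)
    (hf : f ∈ (boxIdeal I I').I X Y) : (PathCat.lift (toTensorPrefunctor I I')).map f = 0 :=
  map_eq_zero_of_mem_genIdeal _ (fun _ => lift_toTensorPrefunctor_map_boxGens I I') hf

lemma map_inlPre_comp_quotFunctor_map_eq_zero (q : W) {X Y : PathCat K V} (f : X ⟶ Y)
    (hf : f ∈ I.I X Y) : (PathCat.map (inlPre q) ⋙ quotFunctor (boxIdeal I I')).map f = 0 :=
  mkHom_eq_zero (mem_genIdeal (Or.inl (Or.inr ⟨_, _, q, f, hf, rfl⟩)))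

lemma map_inrPre_comp_quotFunctor_map_eq_zero (p : V) {X Y : PathCat K W} (f : X ⟶ Y)
    (hf : f ∈ I'.I X Y) : (PathCat.map (inrPre p) ⋙ quotFunctor (boxIdeal I I')).map f = 0 :=
  mkHom_eq_zero (mem_genIdeal (Or.inl (Or.inl ⟨p, _, _, f, hf, rfl⟩)))

def toTensor : CatQuot (boxIdeal I I') ⥤ TensorCat K (CatQuot I) (CatQuot I') :=
  CatQuot.lift _ (lift_toTensorPrefunctor_map_eq_zero I I')

def inlQuot (q : W) : CatQuot I ⥤ CatQuot (boxIdeal I I') :=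
  CatQuot.lift _ (map_inlPre_comp_quotFunctor_map_eq_zero I I' q)

def inrQuot (p : V) : CatQuot I' ⥤ CatQuot (boxIdeal I I') :=
  CatQuot.lift _ (map_inrPre_comp_quotFunctor_map_eq_zero I I' p)

instance : (toTensor I I').Additive := lift_additive _ (lift_toTensorPrefunctor_map_eq_zero I I')
instance : (toTensor I I').Linear K := lift_linear _ (lift_toTensorPrefunctor_map_eq_zero I I')
instance (q : W) : (inlQuot I I' q).Additive :=
  lift_additive _ (map_inlPre_comp_quotFunctor_map_eq_zero I I' q)
instance (q : W) : (inlQuot I I' q).Linear K :=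
  lift_linear _ (map_inlPre_comp_quotFunctor_map_eq_zero I I' q)
instance (p : V) : (inrQuot I I' p).Additive :=
  lift_additive _ (map_inrPre_comp_quotFunctor_map_eq_zero I I' p)
instance (p : V) : (inrQuot I I' p).Linear K :=
  lift_linear _ (map_inrPre_comp_quotFunctor_map_eq_zero I I' p)

def inlHom (q : W) {a a' : V} :
    (obj I (vtx K a) ⟶ obj I (vtx K a')) →ₗ[K]
      (obj (boxIdeal I I') (vtx K (mk a q)) ⟶ obj (boxIdeal I I') (vtx K (mk a' q))) :=
  (inlQuot I I' q).mapLinearMap K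

def inrHom (p : V) {b b' : W} :
    (obj I' (vtx K b) ⟶ obj I' (vtx K b')) →ₗ[K]
      (obj (boxIdeal I I') (vtx K (mk p b)) ⟶ obj (boxIdeal I I') (vtx K (mk p b'))) :=
  (inrQuot I I' p).mapLinearMap K

variable {I I'}

lemma inlHom_id (q : W) (a : V) : inlHom I I' q (𝟙 (obj I (vtx K a))) = 𝟙 _ :=
  (inlQuot I I' q).map_id _

lemma inrHom_id (p : V) (b : W) : inrHom I I' p (𝟙 (obj I' (vtx K b))) = 𝟙 _ :=
  (inrQuot I I' p).map_id _

lemma inlHom_comp (q : W) {a a' a'' : V} (f : obj I (vtx K a) ⟶ obj I (vtx K a'))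
    (f' : obj I (vtx K a') ⟶ obj I (vtx K a'')) :
    inlHom I I' q (f ≫ f') = inlHom I I' q f ≫ inlHom I I' q f' :=
  (inlQuot I I' q).map_comp f f'

lemma inrHom_comp (p : V) {b b' b'' : W} (g : obj I' (vtx K b) ⟶ obj I' (vtx K b'))
    (g' : obj I' (vtx K b') ⟶ obj I' (vtx K b'')) :
    inrHom I I' p (g ≫ g') = inrHom I I' p g ≫ inrHom I I' p g' :=
  (inrQuot I I' p).map_comp g g'

lemma inlHom_mkHom_ofPath (q : W) {a a' : V} (s : Quiver.Path a a') :
    inlHom I I' q (mkHom (ofPath s)) = mkHom (ofPath (inlPath q s)) :=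
  congrArg mkHom (map_map_ofPath _ s)

lemma inrHom_mkHom_ofPath (p : V) {b b' : W} (t : Quiver.Path b b') :
    inrHom I I' p (mkHom (ofPath t)) = mkHom (ofPath (inrPath p t)) :=
  congrArg mkHom (map_map_ofPath _ t)

lemma mkHom_ofPath_inrPath_comp_inlPath {p p' : V} {q q' : W} (s : Quiver.Path p p')
    (t : Quiver.Path q q') :
    mkHom (I := boxIdeal I I') (ofPath (inrPath p t)) ≫ mkHom (ofPath (inlPath q' s)) =
      mkHom (ofPath (inlPath q s)) ≫ mkHom (ofPath (inrPath p' t)) := by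
  have square {p p' : V} {q q' : W} (α : p ⟶ p') (β : q ⟶ q') :
      mkHom (I := boxIdeal I I') (ofPath (inrPath p β.toPath)) ≫
          mkHom (ofPath (inlPath q' α.toPath)) =
        mkHom (ofPath (inlPath q α.toPath)) ≫ mkHom (ofPath (inrPath p' β.toPath)) := by
    rw [← mkHom_comp, ← mkHom_comp, ← ofPath_comp, ← ofPath_comp]
    exact (mkHom_eq_mkHom (mem_genIdeal (Or.inr ⟨p, p', q, q', α, β, rfl⟩))).symm
  have arrow {p p' : V} (α : p ⟶ p') {q q' : W} (t : Quiver.Path q q') :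
      mkHom (I := boxIdeal I I') (ofPath (inrPath p t)) ≫ mkHom (ofPath (inlPath q' α.toPath)) =
        mkHom (ofPath (inlPath q α.toPath)) ≫ mkHom (ofPath (inrPath p' t)) := by
    induction t with
    | nil => exact (Category.id_comp _).trans (Category.comp_id _).symm
    | cons t β ih =>
      rw [inrPath_cons, inrPath_cons, ofPath_comp, ofPath_comp, mkHom_comp, mkHom_comp,
        Category.assoc, square, ← Category.assoc, ih, Category.assoc]
  induction s with
  | nil => exact (Category.comp_id _).trans (Category.id_comp _).symm
  | cons s α ih =>
    rw [inlPath_cons, inlPath_cons, ofPath_comp, ofPath_comp, mkHom_comp, mkHom_comp,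
      ← Category.assoc, ih, Category.assoc, arrow, Category.assoc]

lemma inrHom_comp_inlHom {p p' : V} {q q' : W} (a : obj I (vtx K p) ⟶ obj I (vtx K p'))
    (b : obj I' (vtx K q) ⟶ obj I' (vtx K q')) :
    inrHom I I' p b ≫ inlHom I I' q' a = inlHom I I' q a ≫ inrHom I I' p' b := by
  induction a using hom_induction_ofPath with
  | zero => rw [map_zero, map_zero, Limits.comp_zero, Limits.zero_comp]
  | add a a' ha ha' =>
    rw [map_add, map_add, Preadditive.comp_add, Preadditive.add_comp, ha, ha']
  | smul_ofPath c s =>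
    rw [map_smul, map_smul, Linear.comp_smul, Linear.smul_comp]
    congr 1
    induction b using hom_induction_ofPath with
    | zero => rw [map_zero, map_zero, Limits.zero_comp, Limits.comp_zero]
    | add b b' hb hb' =>
      rw [map_add, map_add, Preadditive.add_comp, Preadditive.comp_add, hb, hb']
    | smul_ofPath d t =>
      rw [map_smul, map_smul, Linear.smul_comp, Linear.comp_smul, inlHom_mkHom_ofPath,
        inlHom_mkHom_ofPath, inrHom_mkHom_ofPath, inrHom_mkHom_ofPath,
        mkHom_ofPath_inrPath_comp_inlPath]

lemma toTensor_map_inlHom (q : W) {a a' : V} (f : obj I (vtx K a) ⟶ obj I (vtx K a')) :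
    (toTensor I I').map (inlHom I I' q f) = f ⊗ₜ[K] 𝟙 (obj I' (vtx K q)) := by
  obtain ⟨f, rfl⟩ := Submodule.Quotient.mk_surjective _ f
  exact lift_toTensorPrefunctor_map_inl I I' q f

lemma toTensor_map_inrHom (p : V) {b b' : W} (g : obj I' (vtx K b) ⟶ obj I' (vtx K b')) :
    (toTensor I I').map (inrHom I I' p g) = 𝟙 (obj I (vtx K p)) ⊗ₜ[K] g := by
  obtain ⟨g, rfl⟩ := Submodule.Quotient.mk_surjective _ g
  exact lift_toTensorPrefunctor_map_inr I I' p g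

variable (I I') in
def ofTensor (x y : BoxQuiver V W) :
    ((toTensorPrefunctor I I').obj x ⟶ (toTensorPrefunctor I I').obj y) →ₗ[K]
      (obj (boxIdeal I I') (vtx K x) ⟶ obj (boxIdeal I I') (vtx K y)) :=
  TensorProduct.lift <| (Linear.comp _ _ _).compl₁₂ (inlHom I I' x.2) (inrHom I I' y.1)

lemma ofTensor_comp {x y z : BoxQuiver V W}
    (u : (toTensorPrefunctor I I').obj x ⟶ (toTensorPrefunctor I I').obj y)
    (v : (toTensorPrefunctor I I').obj y ⟶ (toTensorPrefunctor I I').obj z) :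
    ofTensor I I' x z (u ≫ v) = ofTensor I I' x y u ≫ ofTensor I I' y z v := by
  obtain ⟨x₁, x₂⟩ := x
  obtain ⟨y₁, y₂⟩ := y
  obtain ⟨z₁, z₂⟩ := z
  induction u using TensorProduct.induction_on with
  | zero => rw [Limits.zero_comp, map_zero, map_zero, Limits.zero_comp]
  | add u u' hu hu' => rw [Preadditive.add_comp, map_add, map_add, hu, hu', Preadditive.add_comp]
  | tmul f g =>
    induction v using TensorProduct.induction_on with
    | zero => rw [Limits.comp_zero, map_zero, map_zero, Limits.comp_zero]
    | add v v' hv hv' =>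
      rw [Preadditive.comp_add, map_add, map_add, hv, hv', Preadditive.comp_add]
    | tmul f' g' =>
      change obj I (vtx K x₁) ⟶ obj I (vtx K y₁) at f
      change obj I (vtx K y₁) ⟶ obj I (vtx K z₁) at f'
      change obj I' (vtx K x₂) ⟶ obj I' (vtx K y₂) at g
      change obj I' (vtx K y₂) ⟶ obj I' (vtx K z₂) at g'
      change inlHom I I' x₂ (f ≫ f') ≫ inrHom I I' z₁ (g ≫ g') =
        (inlHom I I' x₂ f ≫ inrHom I I' y₁ g) ≫ (inlHom I I' y₂ f' ≫ inrHom I I' z₁ g')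
      rw [inlHom_comp, inrHom_comp, Category.assoc, Category.assoc,
        ← Category.assoc (inlHom I I' x₂ f'), ← inrHom_comp_inlHom, Category.assoc]

lemma toTensor_map_ofTensor {x y : BoxQuiver V W}
    (u : (toTensorPrefunctor I I').obj x ⟶ (toTensorPrefunctor I I').obj y) :
    (toTensor I I').map (ofTensor I I' x y u) = u := by
  obtain ⟨x₁, x₂⟩ := x
  obtain ⟨y₁, y₂⟩ := y
  induction u using TensorProduct.induction_on with
  | zero => exact (congrArg _ (map_zero _)).trans (Functor.map_zero _ _ _)
  | add u u' hu hu' =>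
    exact (congrArg _ (map_add _ _ _)).trans ((Functor.map_add _).trans (congrArg₂ (· + ·) hu hu'))
  | tmul f g =>
    change obj I (vtx K x₁) ⟶ obj I (vtx K y₁) at f
    change obj I' (vtx K x₂) ⟶ obj I' (vtx K y₂) at g
    change (toTensor I I').map (inlHom I I' x₂ f ≫ inrHom I I' y₁ g) = _
    rw [Functor.map_comp, toTensor_map_inlHom, toTensor_map_inrHom]
    exact (TensorCat.tmul_comp _ _ _ _).trans
      (congrArg₂ (· ⊗ₜ[K] ·) (Category.comp_id f) (Category.id_comp g))

lemma ofTensor_toTensorPrefunctor_map {x y : BoxQuiver V W} (e : x ⟶ y) :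
    ofTensor I I' x y ((toTensorPrefunctor I I').map e) = mkHom (ofPath e.toPath) := by
  obtain ⟨x₁, x₂⟩ := x
  obtain ⟨y₁, y₂⟩ := y
  rcases e with ⟨α, ⟨h⟩⟩ | ⟨⟨h⟩, β⟩
  · obtain rfl : x₂ = y₂ := h
    change inlHom I I' x₂ (mkHom (ofPath α.toPath)) ≫ inrHom I I' y₁ (𝟙 _) = _
    rw [inrHom_id, Category.comp_id, inlHom_mkHom_ofPath]
    rfl
  · obtain rfl : x₁ = y₁ := h
    change inlHom I I' x₂ (𝟙 _) ≫ inrHom I I' x₁ (mkHom (ofPath β.toPath)) = _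
    rw [inlHom_id, Category.id_comp, inrHom_mkHom_ofPath]
    rfl

lemma ofTensor_composePath {x y : BoxQuiver V W} (r : Quiver.Path x y) :
    ofTensor I I' x y (composePath ((toTensorPrefunctor I I').mapPath r)) = mkHom (ofPath r) := by
  induction r with
  | nil =>
    change inlHom I I' x.2 (𝟙 _) ≫ inrHom I I' x.1 (𝟙 _) = 𝟙 _
    rw [inlHom_id, inrHom_id, Category.comp_id]
  | cons r e ih =>
    rw [Prefunctor.mapPath_cons, composePath_cons, ofTensor_comp, ih,
      ofTensor_toTensorPrefunctor_map, ofPath_cons, mkHom_comp]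

lemma ofTensor_toTensor_map {x y : BoxQuiver V W}
    (h : obj (boxIdeal I I') (vtx K x) ⟶ obj (boxIdeal I I') (vtx K y)) :
    ofTensor I I' x y ((toTensor I I').map h) = h := by
  induction h using hom_induction_ofPath with
  | zero => exact (congrArg _ (Functor.map_zero _ _ _)).trans (map_zero _)
  | add h h' hh hh' =>
    exact (congrArg _ (Functor.map_add _)).trans ((map_add _ _ _).trans (congrArg₂ (· + ·) hh hh'))
  | smul_ofPath c r =>
    exact (congrArg _ (Functor.map_smul _ _ _)).trans <| (map_smul _ _ _).trans <|
      congrArg (c • ·) ((congrArg _ (lift_map_ofPath _ r)).trans (ofTensor_composePath r))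

end BoxQuiver

section Statement0

variable {K : Type} [Field K]

theorem statement_0_general (V W : Type) [Quiver.{0} V] [Quiver.{0} W]
    (I : CatIdeal K (PathCat K V)) (I' : CatIdeal K (PathCat K W)) :
    Nonempty (LinearCatIso K (CatQuot (boxIdeal I I'))
      (TensorCat K (CatQuot I) (CatQuot I'))) :=
  ⟨{ F := BoxQuiver.toTensor I I'
     objBijective := Function.bijective_id
     homBijective := fun X Y => Function.bijective_iff_has_inverse.2
       ⟨BoxQuiver.ofTensor I I' X Y, BoxQuiver.ofTensor_toTensor_map,
        BoxQuiver.toTensor_map_ofTensor⟩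
     additive := inferInstance
     linear := inferInstance }⟩

/-- Proposition 1.1 of the paper.
Let `Q` and `Q'` be strongly locally finite quivers and let `I ⊂ KQ`, `I' ⊂ KQ'` be
admissible ideals, inducing ideals `ℐ`, `ℐ'` in the path categories.  Then there is an
isomorphism of `K`-categories `K(𝒬 × 𝒬')/(ℐ □ ℐ') ≅ (K𝒬/ℐ) ⊗_K (K𝒬'/ℐ')`. -/
theorem statement_0 (V W : Type) [Quiver.{0} V] [Quiver.{0} W]
    [StronglyLocallyFinite V] [StronglyLocallyFinite W]
    (I : CatIdeal K (PathCat K V)) (I' : CatIdeal K (PathCat K W))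
    (hI : IsAdmissible I) (hI' : IsAdmissible I') :
    Nonempty (LinearCatIso K (CatQuot (boxIdeal I I'))
      (TensorCat K (CatQuot I) (CatQuot I'))) :=
  statement_0_general V W I I'

end Statement0
end Paper
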